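/- arXiv:1406.1526 — 2 statements merged into one kernel-verified Lean document; each statement's English description precedes it below -/
import Mathlib

section
/- Let G be a totally disconnected, locally compact, second countable topological group and let U and V be compact open subgroups of G. Suppose F_U is a closed normal pro-nilpotent subgroup of U that contains every closed normal pro-nilpotent subgroup of U, and F_V is a closed normal pro-nilpotent subgroup of V that contains every closed normal pro-nilpotent subgroup of V. Then F_U and F_V are commensurate. In particular (taking V = gUg⁻¹), for every g ∈ G the subgroups gF_Ug⁻¹ and F_U are commensurate, i.e., F_U is commensurated by G. -/
/-- A topological group `U` is pro-nilpotent if for every open normal subgroup `N`,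
the quotient `U ⧸ N` is nilpotent. -/
def IsProNilpotent (U : Type*) [Group U] [TopologicalSpace U] : Prop :=
  ∀ (N : Subgroup U) (hN : N.Normal), IsOpen (N : Set U) →
    letI := hN
    Group.IsNilpotent (U ⧸ N)

/-!
Since `V` is profinite, it has an open subgroup `N ≤ U` normal in `V`. The group `K = F_U ⊓ N`
is open in `F_U`, hence of finite index, and is normalized by `N`. Its conjugates under `V` are
finitely many (they only depend on the coset modulo the open normalizer of `K`), lie in `N`, and
normalize one another. So their join `P` is compact and normal in `V`; every finite quotient of
`P` is a join of normal nilpotent subgroups, hence nilpotent by Fitting's theorem for finite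
groups. Maximality of `F_V` gives `K ≤ P ≤ F_V`, so `F_U ⊓ F_V` has finite index in `F_U`.
Conjugation by `g` maps `F_U` to the Fitting subgroup of `gUg⁻¹`, which gives the second claim.
-/

open Subgroup Pointwise ConjAct

section FiniteGroup

theorem Subgroup.not_dvd_index_of_sup_eq_top {G : Type*} [Group G] {p : ℕ} (hp : p.Prime)
    {H K Q : Subgroup G} [H.Normal] [Q.Normal] (hHK : H ⊔ K = ⊤)
    (hH : ¬ p ∣ Q.relIndex H) (hK : ¬ p ∣ Q.relIndex K) : ¬ p ∣ Q.index := by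
  have hHQ : (H ⊔ Q).index ∣ Q.relIndex K := by
    have htop : K ⊔ (H ⊔ Q) = ⊤ := by
      rw [eq_top_iff, ← hHK]
      exact sup_le (le_sup_left.trans le_sup_right) le_sup_left
    rw [← relIndex_top_right, ← htop, relIndex_sup_right]
    exact relIndex_dvd_of_le_left K le_sup_right
  rw [← relIndex_mul_index (le_sup_right : Q ≤ H ⊔ Q), relIndex_sup_right]
  exact fun h => (hp.dvd_mul.mp h).elim hH fun h => hK (h.trans hHQ)

theorem Sylow.not_dvd_relIndex_of_map_subtype_le {G : Type*} [Group G] [Finite G] {p : ℕ}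
    [Fact p.Prime] {H Q : Subgroup G} (P : Sylow p H)
    (hPQ : (P : Subgroup H).map H.subtype ≤ Q) : ¬ p ∣ Q.relIndex H := by
  have hPH : ((P : Subgroup H).map H.subtype).relIndex H = (P : Subgroup H).index := by
    rw [relIndex, ← comap_subtype, comap_map_eq_self_of_injective H.subtype_injective]
  exact fun h => P.not_dvd_index (hPH ▸ h.trans (relIndex_dvd_of_le_left H hPQ))

theorem Group.isNilpotent_of_sup_eq_top {G : Type*} [Group G] [Finite G] {H K : Subgroup G}
    [H.Normal] [K.Normal] [Group.IsNilpotent H] [Group.IsNilpotent K] (hHK : H ⊔ K = ⊤) :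
    Group.IsNilpotent G := by
  refine (Group.isNilpotent_of_finite_tfae.out 0 3 rfl rfl).mpr fun p _ P => ?_
  -- The join of the (normal, hence characteristic) Sylow `p`-subgroups of `H` and `K` is a
  -- normal Sylow `p`-subgroup of `G`.
  obtain ⟨PH⟩ : Nonempty (Sylow p H) := inferInstance
  obtain ⟨PK⟩ : Nonempty (Sylow p K) := inferInstance
  have := PH.characteristic_of_normal inferInstance
  have := PK.characteristic_of_normal inferInstance
  let Q := (PH : Subgroup H).map H.subtype ⊔ (PK : Subgroup K).map K.subtype
  have hQ : IsPGroup p Q := (PH.isPGroup'.map _).to_sup_of_normal_right (PK.isPGroup'.map _)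
  have hpQ : ¬ p ∣ Q.index := not_dvd_index_of_sup_eq_top Fact.out hHK
    (PH.not_dvd_relIndex_of_map_subtype_le le_sup_left)
    (PK.not_dvd_relIndex_of_map_subtype_le le_sup_right)
  have := Sylow.unique_of_normal (hQ.toSylow hpQ) (by rw [IsPGroup.toSylow_coe]; infer_instance)
  rw [Subsingleton.elim P (hQ.toSylow hpQ), IsPGroup.toSylow_coe]
  infer_instance

theorem Group.isNilpotent_sup {G : Type*} [Group G] [Finite G] (H K : Subgroup G)
    [H.Normal] [K.Normal] [Group.IsNilpotent H] [Group.IsNilpotent K] :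
    Group.IsNilpotent ↥(H ⊔ K) := by
  have := nilpotent_of_mulEquiv (subgroupOfEquivOfLe (le_sup_left : H ≤ H ⊔ K)).symm
  have := nilpotent_of_mulEquiv (subgroupOfEquivOfLe (le_sup_right : K ≤ H ⊔ K)).symm
  exact isNilpotent_of_sup_eq_top <| by
    rw [← subgroupOf_sup le_sup_left le_sup_right, subgroupOf_self]

theorem Group.isNilpotent_iSup {G ι : Type*} [Group G] [Finite G] (H : ι → Subgroup G)
    [∀ i, (H i).Normal] [∀ i, Group.IsNilpotent (H i)] : Group.IsNilpotent ↥(⨆ i, H i) := by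
  suffices ∀ S : Set (Subgroup G), (∀ K ∈ S, K.Normal ∧ Group.IsNilpotent K) →
      Group.IsNilpotent ↥(sSup S) by
    rw [← sSup_range]
    exact this _ (Set.forall_mem_range.mpr fun i => ⟨inferInstance, inferInstance⟩)
  intro S
  induction S, S.toFinite using Set.Finite.induction_on with
  | empty =>
    intro _
    rw [sSup_empty]
    infer_instance
  | @insert K S _ _ ih =>
    intro hS
    rw [Set.forall_mem_insert] at hS
    have := ih hS.2
    have := hS.1.1
    have := hS.1.2
    have := sSup_normal S fun L hL => (hS.2 L hL).1
    rw [sSup_insert]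
    exact isNilpotent_sup K (sSup S)

theorem Group.isNilpotent_quotient_of_ker_le {A B : Type*} [Group A] [Group B] (f : A →* B)
    [Group.IsNilpotent f.range] {M : Subgroup A} [M.Normal] (h : f.ker ≤ M) :
    Group.IsNilpotent (A ⧸ M) :=
  have := nilpotent_of_mulEquiv (QuotientGroup.quotientKerEquivRange f).symm
  nilpotent_of_surjective _ (QuotientGroup.map_surjective_of_surjective f.ker M (.id A)
    QuotientGroup.mk_surjective h)

end FiniteGroup

theorem Subgroup.iSup_subgroupOf_iSup {G ι : Type*} [Group G] (J : ι → Subgroup G) :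
    ⨆ i, (J i).subgroupOf (⨆ j, J j) = ⊤ := by
  refine map_injective (⨆ j, J j).subtype_injective ?_
  simp only [map_iSup, subgroupOf_map_subtype, inf_of_le_left (le_iSup J _),
    ← MonoidHom.range_eq_map, range_subtype]

namespace IsProNilpotent

section Hom

variable {A B : Type*} [Group A] [TopologicalSpace A] [Group B]

theorem isNilpotent_range (h : IsProNilpotent A) (f : A →* B) (hf : IsOpen (f.ker : Set A)) :
    Group.IsNilpotent f.range :=
  have := h f.ker inferInstance hf
  Group.nilpotent_of_mulEquiv (QuotientGroup.quotientKerEquivRange f)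

theorem of_mulEquiv [TopologicalSpace B] (e : A ≃* B) (he : Continuous e)
    (h : IsProNilpotent A) : IsProNilpotent B := by
  intro N _ hN
  have := h (N.comap e.toMonoidHom) inferInstance (hN.preimage he)
  exact Group.nilpotent_of_mulEquiv <| QuotientGroup.congr (N.comap e.toMonoidHom) N e
    (map_comap_eq_self_of_surjective e.surjective N)

end Hom

variable {G : Type*} [Group G] [TopologicalSpace G] [IsTopologicalGroup G]

theorem of_le [TotallyDisconnectedSpace G] {F K : Subgroup G} (hF : IsCompact (F : Set G))
    (h : IsProNilpotent F) (hKF : K ≤ F) : IsProNilpotent K := by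
  intro M _ hM
  obtain ⟨S, hS, hSM⟩ := isOpen_induced_iff.mp hM
  have : CompactSpace F := isCompact_iff_compactSpace.mp hF
  have h1 : (1 : K) ∈ Subtype.val ⁻¹' S := hSM ▸ M.one_mem
  obtain ⟨H, hHS⟩ := ProfiniteGrp.exist_openNormalSubgroup_sub_open_nhds_of_one
    (U := (Subtype.val : F → G) ⁻¹' S) (hS.preimage continuous_subtype_val) h1
  have := h H.toSubgroup inferInstance H.isOpen
  let f := (QuotientGroup.mk' H.toSubgroup).comp (inclusion hKF)
  refine Group.isNilpotent_quotient_of_ker_le f fun x hx => ?_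
  rw [← SetLike.mem_coe, ← hSM]
  exact hHS ((QuotientGroup.eq_one_iff _).mp hx)

theorem iSup {ι : Type*} {J : ι → Subgroup G}
    (hc : IsCompact ((⨆ i, J i : Subgroup G) : Set G))
    (hn : ∀ i, ⨆ j, J j ≤ normalizer (J i)) (h : ∀ i, IsProNilpotent (J i)) :
    IsProNilpotent ↥(⨆ i, J i) := by
  intro N _ hN
  have : CompactSpace ↥(⨆ i, J i) := isCompact_iff_compactSpace.mp hc
  have := quotient_finite_of_isOpen N hN
  let π := QuotientGroup.mk' N
  let f i : J i →* _ ⧸ N := π.comp (inclusion (le_iSup J i))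
  have hf i : (f i).range = ((J i).subgroupOf (⨆ j, J j)).map π := by
    rw [MonoidHom.range_comp, inclusion_range]
  have : ∀ i, (f i).range.Normal := fun i => hf i ▸
    (normal_subgroupOf_of_le_normalizer (hn i)).map π (QuotientGroup.mk'_surjective N)
  have : ∀ i, Group.IsNilpotent (f i).range := fun i => (h i).isNilpotent_range (f i) <| by
    rw [← MonoidHom.comap_ker, QuotientGroup.ker_mk', coe_comap]
    exact hN.preimage (Continuous.subtype_mk continuous_subtype_val _)
  have htop : ⨆ i, (f i).range = ⊤ := by
    simp only [hf]
    rw [← Subgroup.map_iSup, iSup_subgroupOf_iSup,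
      map_top_of_surjective π (QuotientGroup.mk'_surjective N)]
  have := Group.isNilpotent_iSup fun i => (f i).range
  rw [htop] at this
  exact Group.nilpotent_of_mulEquiv topEquiv

end IsProNilpotent

theorem Subgroup.isCompact_iSup {G ι : Type*} [Group G] [TopologicalSpace G]
    [IsTopologicalGroup G] {J : ι → Subgroup G} (hfin : (Set.range J).Finite)
    (hc : ∀ i, IsCompact (J i : Set G)) (hn : ∀ i j, J i ≤ normalizer (J j)) :
    IsCompact ((⨆ i, J i : Subgroup G) : Set G) := by
  refine hfin.induction_on_subset (motive := fun S _ => IsCompact ((sSup S : Subgroup G) : Set G))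
    _ (by simp) fun {H S} hH hS _ ih => ?_
  obtain ⟨i, rfl⟩ := hH
  have hle : J i ≤ normalizer (sSup S : Subgroup G) := by
    refine le_trans ?_ (sSup_eq_iSup' S ▸ iInf_normalizer_le_normalizer_iSup _)
    exact le_iInf fun ⟨K, hK⟩ => by obtain ⟨j, rfl⟩ := hS hK; exact hn i j
  rw [sSup_insert, coe_mul_of_left_le_normalizer_right _ _ hle]
  exact (hc i).mul ih

section Conjugation

variable {G : Type*} [Group G]

theorem Subgroup.normalizer_conjAct_smul (g : ConjAct G) (H : Subgroup G) :
    normalizer ((g • H : Subgroup G) : Set G) = g • normalizer (H : Set G) :=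
  (map_equiv_normalizer_eq H (MulAut.conj (ofConjAct g))).symm

theorem Subgroup.conjAct_smul_le_of_mem_normalizer {N K : Subgroup G} {g : G}
    (hg : g ∈ normalizer (N : Set G)) (hKN : K ≤ N) : toConjAct g • K ≤ N :=
  conjAct_pointwise_smul_eq_self hg ▸ pointwise_smul_le_pointwise_smul_iff.mpr hKN

theorem Subgroup.le_normalizer_conjAct_smul {N K : Subgroup G} {g : G}
    (hg : g ∈ normalizer (N : Set G)) (hNK : N ≤ normalizer (K : Set G)) :
    N ≤ normalizer ((toConjAct g • K : Subgroup G) : Set G) := by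
  rw [normalizer_conjAct_smul, ← conjAct_pointwise_smul_eq_self hg]
  exact pointwise_smul_le_pointwise_smul_iff.mpr hNK

theorem Subgroup.le_normalizer_iSup_conjAct_smul (V K : Subgroup G) :
    V ≤ normalizer ((⨆ v : V, toConjAct (v : G) • K : Subgroup G) : Set G) := by
  intro w hw
  rw [← conjAct_pointwise_smul_iff]
  change map (MulAut.conj w).toMonoidHom _ = _
  rw [Subgroup.map_iSup]
  change ⨆ v : V, toConjAct w • toConjAct (v : G) • K = _
  simp only [smul_smul, ← map_mul]
  exact (Equiv.mulLeft (⟨w, hw⟩ : V)).iSup_comp (g := fun v : V => toConjAct (v : G) • K)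

theorem Subgroup.normal_subgroupOf_conjAct_smul {K U : Subgroup G} (hKU : K ≤ U)
    (h : (K.subgroupOf U).Normal) (g : ConjAct G) : ((g • K).subgroupOf (g • U)).Normal := by
  rw [normal_subgroupOf_iff_le_normalizer (pointwise_smul_le_pointwise_smul_iff.mpr hKU),
    normalizer_conjAct_smul]
  exact pointwise_smul_le_pointwise_smul_iff.mpr ((normal_subgroupOf_iff_le_normalizer hKU).mp h)

variable [TopologicalSpace G] [IsTopologicalGroup G]

theorem IsProNilpotent.conjAct_smul {K : Subgroup G} (h : IsProNilpotent K) (g : ConjAct G) :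
    IsProNilpotent ↥(g • K) :=
  h.of_mulEquiv (equivSMul g K) <| continuous_induced_rng.mpr <|
    (continuous_const_smul g).comp continuous_subtype_val

theorem IsCompact.finite_range_conjAct_smul {V K : Subgroup G} (hV : IsCompact (V : Set G))
    (hK : IsOpen (normalizer (K : Set G) : Set G)) :
    (Set.range fun v : V => toConjAct (v : G) • K).Finite := by
  obtain ⟨t, ht⟩ := hV.elim_finite_subcover (fun g : G => g • (normalizer (K : Set G) : Set G))
    (fun g => hK.smul g) fun v _ =>
      Set.mem_iUnion.mpr ⟨v, Set.mem_smul_set.mpr ⟨1, one_mem _, mul_one v⟩⟩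
  refine (t.finite_toSet.image fun g => toConjAct g • K).subset ?_
  rintro _ ⟨v, rfl⟩
  obtain ⟨g, hg, n, hn, hgn⟩ := Set.mem_iUnion₂.mp (ht v.2)
  refine ⟨g, hg, ?_⟩
  simp only [← hgn, smul_eq_mul, map_mul, mul_smul, conjAct_pointwise_smul_eq_self hn]

end Conjugation

theorem Subgroup.relIndex_ne_zero_of_isOpen {G : Type*} [Group G] [TopologicalSpace G]
    [IsTopologicalGroup G] {H K : Subgroup G} (hH : IsOpen (H : Set G))
    (hK : IsCompact (K : Set G)) : H.relIndex K ≠ 0 :=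
  have : CompactSpace K := isCompact_iff_compactSpace.mp hK
  have := quotient_finite_of_isOpen _ (subgroupOf_isOpen K H hH)
  index_ne_zero_of_finite

theorem exists_isOpen_le_normalizer
    {G : Type*} [Group G] [TopologicalSpace G] [IsTopologicalGroup G] [TotallyDisconnectedSpace G]
    {V : Subgroup G} (hVc : IsCompact (V : Set G)) (hVo : IsOpen (V : Set G)) {S : Set G}
    (hS : IsOpen S) (h1 : 1 ∈ S) :
    ∃ N : Subgroup G, IsOpen (N : Set G) ∧ N ≤ V ∧ (N : Set G) ⊆ S ∧
      V ≤ normalizer (N : Set G) := by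
  have : CompactSpace V := isCompact_iff_compactSpace.mp hVc
  obtain ⟨H, hHS⟩ := ProfiniteGrp.exist_openNormalSubgroup_sub_open_nhds_of_one
    (U := (Subtype.val : V → G) ⁻¹' S) (hS.preimage continuous_subtype_val) h1
  refine ⟨H.toSubgroup.map V.subtype, hVo.isOpenMap_subtype_val _ H.isOpen, map_subtype_le _,
    Set.image_subset_iff.mpr hHS, ?_⟩
  calc V = (normalizer (H.toSubgroup : Set V)).map V.subtype := by
        rw [normalizer_eq_top, ← MonoidHom.range_eq_map, range_subtype]
    _ ≤ _ := le_normalizer_map _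

structure IsFittingSubgroup {G : Type*} [Group G] [TopologicalSpace G] (U F : Subgroup G) :
    Prop where
  le : F ≤ U
  isClosed : IsClosed (F : Set G)
  normal : (F.subgroupOf U).Normal
  isProNilpotent : IsProNilpotent F
  maximal : ∀ K : Subgroup G, K ≤ U → IsClosed (K : Set G) → (K.subgroupOf U).Normal →
    IsProNilpotent K → K ≤ F

namespace IsFittingSubgroup

variable {G : Type*} [Group G] [TopologicalSpace G] [IsTopologicalGroup G]

theorem le_of_le_normalizer [T2Space G] {V F N K : Subgroup G} (hF : IsFittingSubgroup V F)
    (hVc : IsCompact (V : Set G)) (hNo : IsOpen (N : Set G)) (hNV : N ≤ V)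
    (hVN : V ≤ normalizer (N : Set G)) (hKN : K ≤ N) (hNK : N ≤ normalizer (K : Set G))
    (hKc : IsCompact (K : Set G)) (hK : IsProNilpotent K) : K ≤ F := by
  set J := fun v : V => toConjAct (v : G) • K
  have hJN v : J v ≤ N := conjAct_smul_le_of_mem_normalizer (hVN v.2) hKN
  have hNJ v : N ≤ normalizer (J v : Set G) := le_normalizer_conjAct_smul (hVN v.2) hNK
  have hPN : ⨆ v, J v ≤ N := iSup_le hJN
  have hPc : IsCompact ((⨆ v, J v : Subgroup G) : Set G) :=
    isCompact_iSup (hVc.finite_range_conjAct_smul (isOpen_mono hNK hNo))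
      (fun v => by rw [coe_pointwise_smul]; exact hKc.smul _) fun v w => (hJN v).trans (hNJ w)
  have hKP : K ≤ ⨆ v, J v := by simpa [J] using le_iSup J 1
  refine hKP.trans (hF.maximal _ (hPN.trans hNV) hPc.isClosed ?_ ?_)
  · exact (normal_subgroupOf_iff_le_normalizer (hPN.trans hNV)).mpr
      (le_normalizer_iSup_conjAct_smul V K)
  · exact IsProNilpotent.iSup hPc (fun v => hPN.trans (hNJ v)) fun v => hK.conjAct_smul _

theorem relIndex_ne_zero [TotallyDisconnectedSpace G] {U V FU FV : Subgroup G}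
    (hU : IsFittingSubgroup U FU) (hV : IsFittingSubgroup V FV) (hUc : IsCompact (U : Set G))
    (hUo : IsOpen (U : Set G)) (hVc : IsCompact (V : Set G)) (hVo : IsOpen (V : Set G)) :
    FV.relIndex FU ≠ 0 := by
  obtain ⟨N, hNo, hNV, hNU, hVN⟩ := exists_isOpen_le_normalizer hVc hVo hUo U.one_mem
  have := hU.normal
  have hNK : N ≤ normalizer ((FU ⊓ N : Subgroup G) : Set G) :=
    (le_inf ((show N ≤ U from hNU).trans (le_normalizer_of_normal_subgroupOf hU.le))
      le_normalizer).trans inf_normalizer_le_normalizer_inf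
  have hFUc : IsCompact (FU : Set G) := hUc.of_isClosed_subset hU.isClosed hU.le
  have hK : FU ⊓ N ≤ FV := hV.le_of_le_normalizer hVc hNo hNV hVN inf_le_right hNK
    (hFUc.of_isClosed_subset (hU.isClosed.inter (N.isClosed_of_isOpen hNo)) inf_le_left)
    (hU.isProNilpotent.of_le hFUc inf_le_left)
  have hdvd := relIndex_dvd_of_le_left FU hK
  rw [inf_relIndex_left] at hdvd
  exact fun h => relIndex_ne_zero_of_isOpen hNo hFUc (Nat.eq_zero_of_zero_dvd (h ▸ hdvd))

theorem commensurable [TotallyDisconnectedSpace G] {U V FU FV : Subgroup G}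
    (hU : IsFittingSubgroup U FU) (hV : IsFittingSubgroup V FV) (hUc : IsCompact (U : Set G))
    (hUo : IsOpen (U : Set G)) (hVc : IsCompact (V : Set G)) (hVo : IsOpen (V : Set G)) :
    FU.Commensurable FV :=
  ⟨hV.relIndex_ne_zero hU hVc hVo hUc hUo, hU.relIndex_ne_zero hV hUc hUo hVc hVo⟩

theorem conjAct_smul {U F : Subgroup G} (hF : IsFittingSubgroup U F) (g : ConjAct G) :
    IsFittingSubgroup (g • U) (g • F) where
  le := pointwise_smul_le_pointwise_smul_iff.mpr hF.le
  isClosed := by rw [coe_pointwise_smul]; exact hF.isClosed.smul g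
  normal := normal_subgroupOf_conjAct_smul hF.le hF.normal g
  isProNilpotent := hF.isProNilpotent.conjAct_smul g
  maximal K hKU hKc hKn hK := by
    have hKU' : g⁻¹ • K ≤ U := subset_pointwise_smul_iff.mp hKU
    refine subset_pointwise_smul_iff.mpr (hF.maximal _ hKU' ?_ ?_ (hK.conjAct_smul _))
    · rw [coe_pointwise_smul]; exact hKc.smul _
    · have := normal_subgroupOf_conjAct_smul hKU hKn g⁻¹
      rwa [inv_smul_smul] at this

end IsFittingSubgroup

theorem fitting_subgroups_commensurate_general
    (G : Type*) [Group G] [TopologicalSpace G] [IsTopologicalGroup G]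
    [TotallyDisconnectedSpace G]
    (U V : Subgroup G)
    (hUc : IsCompact (U : Set G)) (hUo : IsOpen (U : Set G))
    (hVc : IsCompact (V : Set G)) (hVo : IsOpen (V : Set G))
    (FU FV : Subgroup G)
    (hFUle : FU ≤ U) (hFUclosed : IsClosed (FU : Set G))
    (hFUnormal : (FU.subgroupOf U).Normal) (hFUnil : IsProNilpotent ↥FU)
    (hFUmax : ∀ K : Subgroup G, K ≤ U → IsClosed (K : Set G) → (K.subgroupOf U).Normal →
      IsProNilpotent ↥K → K ≤ FU)
    (hFVle : FV ≤ V) (hFVclosed : IsClosed (FV : Set G))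
    (hFVnormal : (FV.subgroupOf V).Normal) (hFVnil : IsProNilpotent ↥FV)
    (hFVmax : ∀ K : Subgroup G, K ≤ V → IsClosed (K : Set G) → (K.subgroupOf V).Normal →
      IsProNilpotent ↥K → K ≤ FV) :
    FU.Commensurable FV ∧
      ∀ g : G, Subgroup.Commensurable (FU.map (MulAut.conj g).toMonoidHom) FU := by
  have hU : IsFittingSubgroup U FU := ⟨hFUle, hFUclosed, hFUnormal, hFUnil, hFUmax⟩
  have hV : IsFittingSubgroup V FV := ⟨hFVle, hFVclosed, hFVnormal, hFVnil, hFVmax⟩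
  refine ⟨hU.commensurable hV hUc hUo hVc hVo, fun g => ?_⟩
  have hgUc : IsCompact ((toConjAct g • U : Subgroup G) : Set G) := by
    rw [coe_pointwise_smul]; exact hUc.smul _
  have hgUo : IsOpen ((toConjAct g • U : Subgroup G) : Set G) := by
    rw [coe_pointwise_smul]; exact hUo.smul _
  exact (hU.conjAct_smul (toConjAct g)).commensurable hU hgUc hgUo hUc hUo

/-- The Fitting subgroups of any two compact open subgroups of a t.d.l.c.s.c. group are
commensurate; in particular the Fitting subgroup of a compact open subgroup is
commensurated by `G`. -/
theorem fitting_subgroups_commensurate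
    (G : Type*) [Group G] [TopologicalSpace G] [IsTopologicalGroup G]
    [LocallyCompactSpace G] [TotallyDisconnectedSpace G]
    [SecondCountableTopology G]
    (U V : Subgroup G)
    (hUc : IsCompact (U : Set G)) (hUo : IsOpen (U : Set G))
    (hVc : IsCompact (V : Set G)) (hVo : IsOpen (V : Set G))
    (FU FV : Subgroup G)
    (hFUle : FU ≤ U) (hFUclosed : IsClosed (FU : Set G))
    (hFUnormal : (FU.subgroupOf U).Normal) (hFUnil : IsProNilpotent ↥FU)
    (hFUmax : ∀ K : Subgroup G, K ≤ U → IsClosed (K : Set G) → (K.subgroupOf U).Normal →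
      IsProNilpotent ↥K → K ≤ FU)
    (hFVle : FV ≤ V) (hFVclosed : IsClosed (FV : Set G))
    (hFVnormal : (FV.subgroupOf V).Normal) (hFVnil : IsProNilpotent ↥FV)
    (hFVmax : ∀ K : Subgroup G, K ≤ V → IsClosed (K : Set G) → (K.subgroupOf V).Normal →
      IsProNilpotent ↥K → K ≤ FV) :
    FU.Commensurable FV ∧
      ∀ g : G, Subgroup.Commensurable (FU.map (MulAut.conj g).toMonoidHom) FU :=
  fitting_subgroups_commensurate_general G U V hUc hUo hVc hVo FU FV hFUle hFUclosed hFUnormal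
    hFUnil hFUmax hFVle hFVclosed hFVnormal hFVnil hFVmax
end

section
/- Let G be a totally disconnected, locally compact, second countable topological group. Then there is an increasing sequence (H_i)_{i∈ℕ} of compactly generated open subgroups of G whose union is G, such that for each i there exist a closed normal subgroup K_i of H_i that is locally elliptic and a finite set of primes π_i such that the quotient group H_i/K_i has a compact open subgroup that is pro-π_i. -/
/-!
By van Dantzig's theorem `G` has a compact open subgroup `V`, and since `G` is separable it is
exhausted by the open subgroups generated by `V` and finitely many elements. So everything
reduces to a compactly generated group `H` with a compact open subgroup `U`.

Choose a compact `Q ∋ 1` with `U * Q ⊆ Q` whose powers cover `H`; the images `Bₙ` of `Qⁿ` in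
`H ⧸ U` are the (finite) balls of a Cayley–Abels graph. Let `K` be the normal core of `U`: it is
compact, hence locally elliptic. An element of `U` fixing `Bₙ` pointwise permutes each translate
`g • B₁` (`g ∈ Qⁿ`), and these translates cover `Bₙ₊₁`; hence the pointwise stabiliser of
`Bₙ₊₁` has index dividing `(|B₁|!)^|Bₙ|` in that of `Bₙ`, and all indices `[U : Fix Bₙ]` divide
a power of `|B₁|!`. These stabilisers are closed and intersect in `K`, so by compactness every
open subgroup of `U` containing `K` contains one of them: the image of `U` in `H ⧸ K` is pro-`π`
for `π` the primes at most `|B₁|`.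
-/

/-- A topological group `U` is pro-`π` (for `π` a set of primes) if for every open normal
subgroup `N`, the quotient `U ⧸ N` is a finite group all of whose prime divisors lie in `π`. -/
def IsProPi (U : Type*) [Group U] [TopologicalSpace U] (π : Finset ℕ) : Prop :=
  ∀ N : Subgroup U, N.Normal → IsOpen (N : Set U) →
    Finite (U ⧸ N) ∧ ∀ r : ℕ, r.Prime → r ∣ Nat.card (U ⧸ N) → r ∈ π

/-- A topological group is locally elliptic if every finite subset generates a subgroup
with compact closure. -/
def LocallyElliptic (K : Type*) [Group K] [TopologicalSpace K] : Prop :=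
  ∀ S : Set K, S.Finite → IsCompact (closure ((Subgroup.closure S : Subgroup K) : Set K))

open scoped Pointwise Nat
open Set

theorem IsCompact.pow {M : Type*} [Monoid M] [TopologicalSpace M] [ContinuousMul M] {s : Set M}
    (hs : IsCompact s) : ∀ n : ℕ, IsCompact (s ^ n)
  | 0 => by simp
  | n + 1 => by simpa [pow_succ] using (hs.pow n).mul hs

theorem isClosed_fixingSubgroup {M α : Type*} [Group M] [MulAction M α] [TopologicalSpace M]
    [TopologicalSpace α] [T1Space α] [ContinuousSMul M α] (s : Set α) :
    IsClosed (fixingSubgroup M s : Set M) := by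
  have : (fixingSubgroup M s : Set M) = ⋂ x ∈ s, (· • x) ⁻¹' {x} := by
    ext; simp [mem_fixingSubgroup_iff]
  rw [this]
  exact isClosed_biInter fun x _ ↦ isClosed_singleton.preimage (continuous_id.smul continuous_const)

theorem index_fixingSubgroup_iUnion_dvd {L α ι : Type*} [Group L] [MulAction L α] [Fintype ι]
    (Y : ι → SubMulAction L α) [∀ i, Finite (Y i)] :
    (fixingSubgroup L (⋃ i, (Y i : Set α))).index ∣ ∏ i, (Nat.card (Y i))! := by
  let σ : L →* ∀ i, Equiv.Perm (Y i) := MonoidHom.pi fun i ↦ MulAction.toPermHom L (Y i)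
  have hker : σ.ker = fixingSubgroup L (⋃ i, (Y i : Set α)) := by
    ext g
    simp [σ, funext_iff, Equiv.Perm.ext_iff, mem_fixingSubgroup_iff, Subtype.ext_iff,
      forall_comm (α := α)]
  rw [← hker, Subgroup.index_ker]
  calc Nat.card σ.range ∣ Nat.card (∀ i, Equiv.Perm (Y i)) := Subgroup.card_subgroup_dvd_card _
    _ = _ := by simp [Nat.card_pi, Nat.card_perm]

theorem exists_mem_pow_of_closure_eq_top {G : Type*} [Group G] {C Q : Set G}
    (hCQ : C ∪ C⁻¹ ⊆ Q) (hC : Subgroup.closure C = ⊤) (g : G) : ∃ n, g ∈ Q ^ n := by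
  have hg : g ∈ Submonoid.closure (C ∪ C⁻¹) := by
    rw [← Subgroup.closure_toSubmonoid, hC]
    trivial
  induction hg using Submonoid.closure_induction with
  | mem x hx => exact ⟨1, by simpa using hCQ hx⟩
  | one => exact ⟨0, by simp⟩
  | mul x y _ _ hx hy =>
    obtain ⟨m, hm⟩ := hx
    obtain ⟨n, hn⟩ := hy
    exact ⟨m + n, pow_add Q m n ▸ mul_mem_mul hm hn⟩

theorem LocallyElliptic.of_compactSpace {K : Type*} [Group K] [TopologicalSpace K]
    [CompactSpace K] : LocallyElliptic K :=
  fun _ _ ↦ isClosed_closure.isCompact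

theorem isProPi_primesBelow_of_surjective {U W : Type*} [Group U] [TopologicalSpace U]
    [CompactSpace U] [Group W] [TopologicalSpace W] (f : U →* W) (hf : Continuous f)
    (hfs : Function.Surjective f) (L : ℕ → Subgroup U) (hL : Antitone L)
    (hLc : ∀ n, IsClosed (L n : Set U)) (hker : ∀ u, (∀ n, u ∈ L n) → f u = 1) (D : ℕ)
    (hLD : ∀ n, ∃ m, (L n).index ∣ D ! ^ m) : IsProPi W (D + 1).primesBelow := by
  intro N _ hN
  obtain ⟨n, hn⟩ : ∃ n, (L n : Set U) ⊆ N.comap f :=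
    exists_subset_nhds_of_isCompact' hL.directed_ge (fun n ↦ (hLc n).isCompact) hLc
      fun u hu ↦ (hN.preimage hf).mem_nhds <| by simp [hker u (by simpa using hu)]
  obtain ⟨m, hm⟩ := hLD n
  have hdvd : Nat.card (W ⧸ N) ∣ D ! ^ m := by
    rw [← Subgroup.index_eq_card, ← N.index_comap_of_surjective hfs]
    exact (Subgroup.index_dvd_of_le hn).trans hm
  refine ⟨Nat.finite_of_card_ne_zero (ne_zero_of_dvd_ne_zero (by positivity) hdvd),
    fun r hr hrN ↦ Nat.mem_primesBelow.2 ⟨?_, hr⟩⟩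
  exact Nat.lt_succ_of_le (hr.dvd_factorial.1 (hr.dvd_of_dvd_pow (hrN.trans hdvd)))

theorem exists_isOpen_isCompact_subgroup (G : Type*) [Group G] [TopologicalSpace G]
    [IsTopologicalGroup G] [LocallyCompactSpace G] [TotallyDisconnectedSpace G] :
    ∃ V : Subgroup G, IsOpen (V : Set G) ∧ IsCompact (V : Set G) := by
  obtain ⟨K, hKc, hK1⟩ := exists_compact_mem_nhds (1 : G)
  obtain ⟨W, hW, h1W, hWK⟩ := loc_compact_Haus_tot_disc_of_zero_dim.mem_nhds_iff.1 hK1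
  have hWc : IsCompact W := hKc.of_isClosed_subset hW.isClosed hWK
  obtain ⟨T, hT1, hWT⟩ := compact_open_separated_mul_right hWc hW.isOpen subset_rfl
  have hS1 : T ∩ T⁻¹ ∈ nhds (1 : G) := Filter.inter_mem hT1 (inv_mem_nhds_one G hT1)
  have hVo : IsOpen (Subgroup.closure (T ∩ T⁻¹) : Set G) :=
    Subgroup.isOpen_of_mem_nhds _ (Filter.mem_of_superset hS1 Subgroup.subset_closure)
  have hWV : ∀ g ∈ Subgroup.closure (T ∩ T⁻¹), ∀ w ∈ W, w * g ∈ W := by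
    intro g hg
    induction hg using Subgroup.closure_induction'' with
    | mem x hx => exact fun w hw ↦ hWT (mul_mem_mul hw hx.1)
    | inv_mem x hx => exact fun w hw ↦ hWT (mul_mem_mul hw hx.2)
    | one => simp
    | mul x y _ _ hx hy => exact fun w hw ↦ mul_assoc w x y ▸ hy _ (hx w hw)
  refine ⟨_, hVo, hWc.of_isClosed_subset (Subgroup.isClosed_of_isOpen _ hVo) fun g hg ↦ ?_⟩
  simpa using hWV g hg 1 h1W

theorem exists_finite_closure_union_exhaustion {G : Type*} [Group G] [TopologicalSpace G]
    [IsTopologicalGroup G] [TopologicalSpace.SeparableSpace G] {V : Subgroup G}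
    (hV : IsOpen (V : Set G)) :
    ∃ F : ℕ → Set G, Monotone F ∧ (∀ i, (F i).Finite) ∧
      ∀ x, ∃ i, x ∈ Subgroup.closure ((V : Set G) ∪ F i) := by
  have : Nonempty G := ⟨1⟩
  let u := TopologicalSpace.denseSeq G
  refine ⟨fun i ↦ u '' Iio i, fun i j h ↦ image_mono (Iio_subset_Iio h),
    fun i ↦ (finite_Iio i).image u, fun x ↦ ?_⟩
  obtain ⟨j, v, hv, hj⟩ := (TopologicalSpace.denseRange_denseSeq G).exists_mem_open (hV.smul x)
    ⟨x, 1, V.one_mem, mul_one x⟩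
  refine ⟨j + 1, ?_⟩
  rw [eq_mul_inv_of_mul_eq hj]
  exact mul_mem (Subgroup.subset_closure (Or.inr ⟨j, by simp, rfl⟩))
    (inv_mem (Subgroup.subset_closure (Or.inl hv)))

section CosetBall

variable {H : Type*} [Group H] (U : Subgroup H) (Q : Set H)

def cosetBall (n : ℕ) : Set (H ⧸ U) := (↑) '' (Q ^ n)

def ballFixer (n : ℕ) : Subgroup U := fixingSubgroup U (cosetBall U Q n)

variable {U Q}

theorem cosetBall_mono (hQ1 : 1 ∈ Q) : Monotone (cosetBall U Q) :=
  fun _ _ h ↦ image_mono (pow_subset_pow_right hQ1 h)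

theorem ballFixer_antitone (hQ1 : 1 ∈ Q) : Antitone (ballFixer U Q) :=
  fun _ _ h ↦ fixingSubgroup_antitone _ _ (cosetBall_mono hQ1 h)

theorem ballFixer_zero : ballFixer U Q 0 = ⊤ := by
  refine eq_top_iff.2 fun u _ ↦ (mem_fixingSubgroup_iff _).2 ?_
  rintro _ ⟨_, rfl, rfl⟩
  exact QuotientGroup.eq.2 (by simp)

theorem cosetBall_succ (hUQ : (U : Set H) * Q ⊆ Q) (n : ℕ) :
    cosetBall U Q (n + 1) = ⋃ x : cosetBall U Q n, (x : H ⧸ U).out • cosetBall U Q 1 := by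
  ext y
  simp only [cosetBall, pow_one, mem_iUnion, Subtype.exists, mem_image, exists_prop]
  rw [pow_succ]
  constructor
  · rintro ⟨_, ⟨a, ha, q, hq, rfl⟩, rfl⟩
    obtain ⟨u, hu⟩ := QuotientGroup.mk_out_eq_mul U a
    refine ⟨_, ⟨a, ha, rfl⟩, _, ⟨(u : H)⁻¹ * q, ?_, rfl⟩, ?_⟩
    · simpa using hUQ (mul_mem_mul (U.inv_mem u.2) hq)
    · show ((_ * _ : H) : H ⧸ U) = _
      rw [hu]
      group
  · rintro ⟨_, ⟨a, ha, rfl⟩, _, ⟨q, hq, rfl⟩, rfl⟩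
    obtain ⟨u, hu⟩ := QuotientGroup.mk_out_eq_mul U a
    refine ⟨a * (u * q), mul_mem_mul ha (by simpa using hUQ (mul_mem_mul u.2 hq)), ?_⟩
    show _ = ((_ * _ : H) : H ⧸ U)
    rw [hu, mul_assoc]

theorem smul_mem_out_smul_cosetBall_one (hUQ : (U : Set H) * Q ⊆ Q) {g : H} {x : H ⧸ U}
    (hgx : g • x = x) {y : H ⧸ U} (hy : y ∈ x.out • cosetBall U Q 1) :
    g • y ∈ x.out • cosetBall U Q 1 := by
  obtain ⟨_, ⟨q, hq, rfl⟩, rfl⟩ := hy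
  have hconj : x.out⁻¹ * g * x.out ∈ U := by
    rw [← QuotientGroup.out_eq' x] at hgx
    simpa [mul_assoc] using U.inv_mem (QuotientGroup.eq.1 hgx)
  refine ⟨_, ⟨_, by simpa using hUQ (mul_mem_mul hconj (by simpa using hq)), rfl⟩, ?_⟩
  show ((x.out * (x.out⁻¹ * g * x.out * q) : H) : H ⧸ U) = ((g * (x.out * q) : H) : H ⧸ U)
  group

theorem relIndex_ballFixer_succ_dvd (hUQ : (U : Set H) * Q ⊆ Q) {n : ℕ}
    (hn : (cosetBall U Q n).Finite) (h1 : (cosetBall U Q 1).Finite) :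
    (ballFixer U Q (n + 1)).relIndex (ballFixer U Q n) ∣
      (cosetBall U Q 1).ncard ! ^ (cosetBall U Q n).ncard := by
  have := hn.fintype
  let Y (x : cosetBall U Q n) : SubMulAction (ballFixer U Q n) (H ⧸ U) :=
    { carrier := (x : H ⧸ U).out • cosetBall U Q 1
      smul_mem' l _ hy :=
        smul_mem_out_smul_cosetBall_one hUQ ((mem_fixingSubgroup_iff _).1 l.2 x x.2) hy }
  have hY : ∀ x, Nat.card (Y x) = (cosetBall U Q 1).ncard := fun x ↦
    (Nat.card_coe_set_eq _).trans (ncard_smul_set _ _)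
  have : ∀ x, Finite (Y x) := fun x ↦ (h1.smul_set (a := (x : H ⧸ U).out)).to_subtype
  have hfix : (ballFixer U Q (n + 1)).subgroupOf (ballFixer U Q n) =
      fixingSubgroup _ (⋃ x, (Y x : Set (H ⧸ U))) := by
    ext l
    rw [Subgroup.mem_subgroupOf, ballFixer, cosetBall_succ hUQ]
    rfl
  rw [Subgroup.relIndex, hfix]
  refine (index_fixingSubgroup_iUnion_dvd Y).trans ?_
  simp [hY]

theorem index_ballFixer_dvd (hUQ : (U : Set H) * Q ⊆ Q) (hQ1 : 1 ∈ Q)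
    (hfin : ∀ n, (cosetBall U Q n).Finite) :
    ∀ n, ∃ m, (ballFixer U Q n).index ∣ (cosetBall U Q 1).ncard ! ^ m
  | 0 => ⟨0, by simp [ballFixer_zero]⟩
  | n + 1 => by
    obtain ⟨m, hm⟩ := index_ballFixer_dvd hUQ hQ1 hfin n
    refine ⟨(cosetBall U Q n).ncard + m, ?_⟩
    rw [← Subgroup.relIndex_mul_index (ballFixer_antitone hQ1 n.le_succ), pow_add]
    exact mul_dvd_mul (relIndex_ballFixer_succ_dvd hUQ (hfin n) (hfin 1)) hm

theorem coe_mem_normalCore_of_forall_mem_ballFixer (hQ : ∀ g : H, ∃ n, g ∈ Q ^ n) {u : U}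
    (hu : ∀ n, u ∈ ballFixer U Q n) : (u : H) ∈ U.normalCore := by
  rw [Subgroup.normalCore_eq_ker, MonoidHom.mem_ker]
  ext x
  obtain ⟨g, rfl⟩ := QuotientGroup.mk_surjective x
  obtain ⟨n, hn⟩ := hQ g
  exact (mem_fixingSubgroup_iff _).1 (hu n) _ (mem_image_of_mem _ hn)

variable [TopologicalSpace H] [IsTopologicalGroup H]

theorem cosetBall_finite (hU : IsOpen (U : Set H)) (hQ : IsCompact Q) (n : ℕ) :
    (cosetBall U Q n).Finite :=
  have := QuotientGroup.discreteTopology hU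
  ((hQ.pow n).image QuotientGroup.continuous_mk).finite_of_discrete

theorem isClosed_ballFixer (hU : IsOpen (U : Set H)) (n : ℕ) :
    IsClosed (ballFixer U Q n : Set U) :=
  have := QuotientGroup.discreteTopology hU
  have : ContinuousSMul U (H ⧸ U) := Subgroup.continuousSMul
  isClosed_fixingSubgroup _

theorem exists_closed_normal_locallyElliptic_quotient_isProPi {C : Set H} (hC : IsCompact C)
    (hCgen : Subgroup.closure C = ⊤) (hUo : IsOpen (U : Set H)) (hUc : IsCompact (U : Set H)) :
    ∃ K : Subgroup H, IsClosed (K : Set H) ∧ ∃ hK : K.Normal, LocallyElliptic K ∧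
      ∃ π : Finset ℕ, (∀ r ∈ π, Nat.Prime r) ∧
        (letI := hK
          ∃ W : Subgroup (H ⧸ K), IsCompact (W : Set (H ⧸ K)) ∧
            IsOpen (W : Set (H ⧸ K)) ∧ IsProPi W π) := by
  set Q : Set H := U * insert 1 (C ∪ C⁻¹)
  have hQ1 : (1 : H) ∈ Q := ⟨1, U.one_mem, 1, mem_insert 1 _, one_mul 1⟩
  have hUQ : (U : Set H) * Q ⊆ Q := by
    rw [← mul_assoc]
    exact mul_subset_mul_right U.toSubmonoid.coe_mul_self_eq.subset
  have hCQ : C ∪ C⁻¹ ⊆ Q := fun c hc ↦ ⟨1, U.one_mem, c, mem_insert_of_mem 1 hc, one_mul c⟩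
  have hQc : IsCompact Q := hUc.mul ((hC.union hC.inv).insert 1)
  have hK : IsClosed (U.normalCore : Set H) := U.normalCore_isClosed (U.isClosed_of_isOpen hUo)
  have : CompactSpace U.normalCore := isCompact_iff_compactSpace.1 <|
    hUc.of_isClosed_subset hK U.normalCore_le
  refine ⟨U.normalCore, hK, U.normalCore_normal, .of_compactSpace,
    ((cosetBall U Q 1).ncard + 1).primesBelow,
    fun _ ↦ Nat.prime_of_mem_primesBelow, U.map (QuotientGroup.mk' _),
    hUc.image QuotientGroup.continuous_mk, QuotientGroup.isOpenMap_coe _ hUo, ?_⟩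
  have : CompactSpace U := isCompact_iff_compactSpace.1 hUc
  refine isProPi_primesBelow_of_surjective _ ?_ (MonoidHom.subgroupMap_surjective _ U)
    (ballFixer U Q) (ballFixer_antitone hQ1) (isClosed_ballFixer hUo) (fun u hu ↦ ?_) _
    (index_ballFixer_dvd hUQ hQ1 (cosetBall_finite hUo hQc))
  · exact (QuotientGroup.continuous_mk.comp continuous_subtype_val).subtype_mk _
  · exact Subtype.ext ((QuotientGroup.eq_one_iff _).2 <|
      coe_mem_normalCore_of_forall_mem_ballFixer (exists_mem_pow_of_closure_eq_top hCQ hCgen) hu)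

end CosetBall

/-- Every t.d.l.c.s.c. group is an increasing union of compactly generated open subgroups
`H i`, each of which has a closed normal locally elliptic subgroup `K i` such that
`H i ⧸ K i` has a pro-`π i` compact open subgroup for some finite set of primes `π i`. -/
theorem exhaustion_by_locally_proPi_mod_elliptic
    (G : Type*) [Group G] [TopologicalSpace G] [IsTopologicalGroup G]
    [LocallyCompactSpace G] [TotallyDisconnectedSpace G] [SecondCountableTopology G] :
    ∃ H : ℕ → Subgroup G, Monotone H ∧ (∀ x : G, ∃ i, x ∈ H i) ∧
      ∀ i : ℕ, IsOpen ((H i : Set G)) ∧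
        (∃ C : Set G, C ⊆ H i ∧ IsCompact C ∧ Subgroup.closure C = H i) ∧
        ∃ K : Subgroup ↥(H i), IsClosed (K : Set ↥(H i)) ∧
          ∃ hK : K.Normal, LocallyElliptic ↥K ∧
            ∃ π : Finset ℕ, (∀ r ∈ π, Nat.Prime r) ∧
              (letI := hK
                ∃ W : Subgroup (↥(H i) ⧸ K), IsCompact (W : Set (↥(H i) ⧸ K)) ∧
                  IsOpen (W : Set (↥(H i) ⧸ K)) ∧ IsProPi ↥W π) := by
  obtain ⟨V, hVo, hVc⟩ := exists_isOpen_isCompact_subgroup G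
  obtain ⟨F, hF, hFfin, hcover⟩ := exists_finite_closure_union_exhaustion hVo
  refine ⟨fun i ↦ Subgroup.closure (V ∪ F i),
    fun i j h ↦ Subgroup.closure_mono (union_subset_union_right _ (hF h)), hcover, fun i ↦ ?_⟩
  set Hi := Subgroup.closure ((V : Set G) ∪ F i)
  have hC : IsCompact ((V : Set G) ∪ F i) := hVc.union (hFfin i).isCompact
  have hHo : IsOpen (Hi : Set G) :=
    Subgroup.isOpen_mono (fun v hv ↦ Subgroup.subset_closure (Or.inl hv)) hVo
  have hemb := (Hi.isClosed_of_isOpen hHo).isClosedEmbedding_subtypeVal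
  refine ⟨hHo, ⟨_, Subgroup.subset_closure, hC, rfl⟩,
    exists_closed_normal_locallyElliptic_quotient_isProPi (U := V.subgroupOf Hi)
      (hemb.isCompact_preimage hC) (Subgroup.closure_preimage_eq_top _)
      (Subgroup.subgroupOf_isOpen _ _ hVo) ?_⟩
  rw [Subgroup.coe_subgroupOf]
  exact hemb.isCompact_preimage hVc
end
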